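/- arXiv:2507.16536 — 2 statements merged into one kernel-verified Lean document; each statement's English description precedes it below -/
import Mathlib

section
/- Let σ = (σ_1,...,σ_n) be a finite sequence of positive integers with σ_n > 1, let 𝓔*(σ) := Σ_{k=0}^{n} ([σ_1,...,σ_n] - [σ_1,...,σ_k]) and let σ' = (σ_1,...,σ_{n-1}, σ_n - 1, 1) with corresponding sum 𝓔*(σ'). Then 𝓔*(σ') = 𝓔*(σ) + (-1)^n / (q_n(σ)(q_n(σ) - q_{n-1}(σ))). -/
noncomputable def cfValAux : List ℕ → ℝ
  | [] => 0
  | a :: l => 1 / ((a : ℝ) + cfValAux l)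

def cfList (σ : ℕ → ℕ) (m : ℕ) : List ℕ :=
  (List.range m).map fun i => σ (i + 1)

def cfQ (σ : ℕ → ℕ) : ℕ → ℕ
  | 0 => 0
  | 1 => 1
  | (k + 2) => σ (k + 1) * cfQ σ (k + 1) + cfQ σ k

noncomputable def Estar (σ : ℕ → ℕ) (m : ℕ) : ℝ :=
  ∑ k ∈ Finset.range (m + 1), (cfValAux (cfList σ m) - cfValAux (cfList σ k))

/-- CF value with a real "tail" `t` appended at the bottom. -/
noncomputable def cfG : List ℕ → ℝ → ℝ
  | [], t => t
  | a :: l, t => 1 / ((a : ℝ) + cfG l t)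

/-- `cont l = ((A,B),(C,D))` where `C` is the continuant (denominator) of `l`,
`D` that of `l.dropLast`, `A` that of `l.tail`, `B` that of `l.tail.dropLast`. -/
def cont : List ℕ → (ℕ × ℕ) × (ℕ × ℕ)
  | [] => ((0, 1), (1, 0))
  | a :: l => ((cont l).2, (a * (cont l).2.1 + (cont l).1.1, a * (cont l).2.2 + (cont l).1.2))

lemma cfValAux_eq_cfG (l : List ℕ) : cfValAux l = cfG l 0 := by
  induction l with
  | nil => rfl
  | cons a l ih => simp [cfValAux, cfG, ih]

lemma cfG_append (l : List ℕ) (a : ℕ) (t : ℝ) :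
    cfG (l ++ [a]) t = cfG l (1 / ((a : ℝ) + t)) := by
  induction l with
  | nil => rfl
  | cons b l ih => simp [cfG, ih]

lemma cfList_succ (σ : ℕ → ℕ) (m : ℕ) :
    cfList σ (m + 1) = cfList σ m ++ [σ (m + 1)] := by
  simp [cfList, List.range_succ]

lemma cfList_length (σ : ℕ → ℕ) (m : ℕ) : (cfList σ m).length = m := by
  simp [cfList]

lemma cont_append (l : List ℕ) (a : ℕ) :
    cont (l ++ [a]) = ((a * (cont l).1.1 + (cont l).1.2, (cont l).1.1),
      (a * (cont l).2.1 + (cont l).2.2, (cont l).2.1)) := by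
  induction l with
  | nil => simp [cont]
  | cons b l ih =>
    show cont (b :: (l ++ [a])) = _
    rw [cont, ih, cont]
    simp only [Prod.mk.injEq]
    exact ⟨trivial, by ring, trivial⟩

lemma cont_det (l : List ℕ) :
    ((cont l).1.1 : ℤ) * (cont l).2.2 - (cont l).1.2 * (cont l).2.1
      = (-1) ^ (l.length + 1) := by
  induction l with
  | nil => simp [cont]
  | cons a l ih =>
    simp only [cont, List.length_cons]
    push_cast
    linear_combination (-1 : ℤ) * ih

lemma contC_pos (l : List ℕ) (hl : ∀ a ∈ l, 1 ≤ a) : 1 ≤ (cont l).2.1 := by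
  induction l with
  | nil => simp [cont]
  | cons a l ih =>
    have h1 := ih (fun b hb => hl b (List.mem_cons_of_mem _ hb))
    have ha := hl a (List.mem_cons_self)
    simp only [cont]
    nlinarith

lemma cfG_eq (l : List ℕ) (hl : ∀ a ∈ l, 1 ≤ a) (t : ℝ) (ht : 0 ≤ t) :
    cfG l t = (((cont l).1.1 : ℝ) + t * (cont l).1.2)
      / (((cont l).2.1 : ℝ) + t * (cont l).2.2) := by
  induction l with
  | nil => simp [cfG, cont]
  | cons a l ih =>
    have hl' : ∀ b ∈ l, 1 ≤ b := fun b hb => hl b (List.mem_cons_of_mem _ hb)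
    have ha : 1 ≤ a := hl a (List.mem_cons_self)
    have hC : (1 : ℝ) ≤ (cont l).2.1 := by exact_mod_cast contC_pos l hl'
    have hD : (0 : ℝ) ≤ (cont l).2.2 := by positivity
    have hden : (0 : ℝ) < (cont l).2.1 + t * (cont l).2.2 := by nlinarith
    have hnum : (0 : ℝ) ≤ ((cont l).1.1 : ℝ) + t * (cont l).1.2 := by positivity
    have hg : 0 ≤ cfG l t := by
      rw [ih hl']
      exact div_nonneg hnum hden.le
    have ha' : (1 : ℝ) ≤ a := by exact_mod_cast ha
    have hag : (0 : ℝ) < (a : ℝ) + cfG l t := by linarith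
    show 1 / ((a : ℝ) + cfG l t) = _
    rw [ih hl']
    have hstep : (a : ℝ) + (((cont l).1.1 : ℝ) + t * (cont l).1.2)
        / (((cont l).2.1 : ℝ) + t * (cont l).2.2)
        = ((a * (cont l).2.1 + (cont l).1.1 : ℝ) + t * (a * (cont l).2.2 + (cont l).1.2))
          / (((cont l).2.1 : ℝ) + t * (cont l).2.2) := by
      field_simp
      ring
    rw [hstep, one_div_div]
    simp only [cont]
    push_cast
    ring_nf

lemma cont_cfQ (σ : ℕ → ℕ) (m : ℕ) :
    (cont (cfList σ m)).2.1 = cfQ σ (m + 1) ∧ (cont (cfList σ m)).2.2 = cfQ σ m := by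
  induction m with
  | zero => simp [cfList, cont, cfQ]
  | succ m ih =>
    rw [cfList_succ, cont_append]
    exact ⟨by simp [cfQ, ih.1, ih.2], by simp [ih.1]⟩

/-- `𝓔*(σ') = 𝓔*(σ) + (-1)^n / (q_n(σ)(q_n(σ) - q_{n-1}(σ)))` where
`σ' = (σ_1,…,σ_{n-1}, σ_n - 1, 1)`. -/
theorem Estar_modified_sequence (σ : ℕ → ℕ) (n : ℕ) (hn : 1 ≤ n)
    (hσ : ∀ k, 1 ≤ k → k ≤ n → 1 ≤ σ k) (hlast : 2 ≤ σ n) :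
    let σ' : ℕ → ℕ := fun k => if k = n then σ n - 1 else if k = n + 1 then 1 else σ k
    Estar σ' (n + 1) = Estar σ n +
      (-1 : ℝ) ^ n / ((cfQ σ (n + 1) : ℝ) * ((cfQ σ (n + 1) : ℝ) - (cfQ σ n : ℝ))) := by
  obtain ⟨m, rfl⟩ : ∃ m, n = m + 1 := ⟨n - 1, by omega⟩
  intro σ'
  have hσ'def : ∀ k, σ' k = if k = m + 1 then σ (m + 1) - 1
      else if k = m + 1 + 1 then 1 else σ k := fun _ => rfl
  -- σ' agrees with σ below m+1
  have key : ∀ k, k ≤ m → cfList σ' k = cfList σ k := by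
    intro k hk
    unfold cfList
    apply List.map_congr_left
    intro i hi
    rw [List.mem_range] at hi
    rw [hσ'def, if_neg (by omega), if_neg (by omega)]
  have hL1 : cfList σ' (m + 1) = cfList σ m ++ [σ (m + 1) - 1] := by
    rw [cfList_succ, key m le_rfl, hσ'def, if_pos rfl]
  have hL2 : cfList σ' (m + 1 + 1) = (cfList σ m ++ [σ (m + 1) - 1]) ++ [1] := by
    rw [cfList_succ, hL1, hσ'def, if_neg (by omega), if_pos rfl]
  set L := cfList σ m with hLdef
  have hl : ∀ a ∈ L, 1 ≤ a := by
    intro a ha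
    rw [hLdef] at ha
    simp only [cfList, List.mem_map, List.mem_range] at ha
    obtain ⟨i, hi, rfl⟩ := ha
    exact hσ (i + 1) (by omega) (by omega)
  have hs1 : 1 ≤ σ (m + 1) := by omega
  have hsub : ((σ (m + 1) - 1 : ℕ) : ℝ) = (σ (m + 1) : ℝ) - 1 := by
    push_cast [Nat.cast_sub hs1]; ring
  have hsR : (2 : ℝ) ≤ (σ (m + 1) : ℝ) := by exact_mod_cast hlast
  -- values
  have hgx : cfValAux (cfList σ (m + 1)) = cfG L (1 / (σ (m + 1) : ℝ)) := by
    rw [cfValAux_eq_cfG, cfList_succ, cfG_append, add_zero]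
  have hgw : cfValAux (cfList σ' (m + 1)) = cfG L (1 / ((σ (m + 1) : ℝ) - 1)) := by
    rw [hL1, cfValAux_eq_cfG, cfG_append, add_zero, hsub]
  have hgx' : cfValAux (cfList σ' (m + 1 + 1)) = cfG L (1 / (σ (m + 1) : ℝ)) := by
    rw [hL2, cfValAux_eq_cfG, cfG_append, cfG_append, hsub]
    norm_num
  have hX : cfValAux (cfList σ' (m + 1 + 1)) = cfValAux (cfList σ (m + 1)) := by
    rw [hgx, hgx']
  -- sum manipulation
  have hcongr : (∑ k ∈ Finset.range (m + 1),
        (cfValAux (cfList σ' (m + 1 + 1)) - cfValAux (cfList σ' k)))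
      = ∑ k ∈ Finset.range (m + 1),
        (cfValAux (cfList σ (m + 1)) - cfValAux (cfList σ k)) := by
    refine Finset.sum_congr rfl fun k hk => ?_
    have hk' := Finset.mem_range.mp hk
    rw [key k (by omega), hX]
  have hsum : Estar σ' (m + 1 + 1) = Estar σ (m + 1) +
      (cfValAux (cfList σ (m + 1)) - cfValAux (cfList σ' (m + 1))) := by
    unfold Estar
    rw [Finset.sum_range_succ (n := m + 1 + 1), Finset.sum_range_succ (n := m + 1), hcongr,
      hX, Finset.sum_range_succ (n := m + 1)]
    ring
  rw [hsum, hgx, hgw]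
  congr 1
  -- algebra
  set A := ((cont L).1.1 : ℝ)
  set B := ((cont L).1.2 : ℝ)
  set C := ((cont L).2.1 : ℝ)
  set D := ((cont L).2.2 : ℝ)
  set s := ((σ (m + 1) : ℕ) : ℝ) with hsdef
  have hC1 : (1 : ℝ) ≤ C := Nat.one_le_cast.mpr (contC_pos L hl)
  have hD0 : (0 : ℝ) ≤ D := Nat.cast_nonneg _
  have hs0 : (0 : ℝ) < s := by linarith
  have hs10 : (0 : ℝ) < s - 1 := by linarith
  have ht1 : (0 : ℝ) ≤ 1 / s := by positivity
  have ht2 : (0 : ℝ) ≤ 1 / (s - 1) := by positivity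
  have hden1 : (0 : ℝ) < C + (1 / s) * D := by
    have := mul_nonneg ht1 hD0; linarith
  have hden2 : (0 : ℝ) < C + (1 / (s - 1)) * D := by
    have := mul_nonneg ht2 hD0; linarith
  have hq1 : (0 : ℝ) < s * C + D := by nlinarith
  have hq2 : (0 : ℝ) < (s - 1) * C + D := by nlinarith
  have e1 : cfG L (1 / s) = (s * A + B) / (s * C + D) := by
    rw [cfG_eq L hl _ ht1]
    rw [div_eq_div_iff hden1.ne' hq1.ne']
    field_simp
    ring
  have e2 : cfG L (1 / (s - 1)) = ((s - 1) * A + B) / ((s - 1) * C + D) := by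
    rw [cfG_eq L hl _ ht2]
    rw [div_eq_div_iff hden2.ne' hq2.ne']
    field_simp
    ring
  have hdet : A * D - B * C = (-1 : ℝ) ^ (m + 1) := by
    have h := cont_det L
    rw [cfList_length] at h
    have h' := congrArg (fun z : ℤ => (z : ℝ)) h
    push_cast at h'
    exact h'
  have hqC : (cfQ σ (m + 1 + 1) : ℝ) = s * C + D := by
    have h1 := (cont_cfQ σ m).1
    have h2 := (cont_cfQ σ m).2
    show ((cfQ σ (m + 2) : ℕ) : ℝ) = _
    rw [show cfQ σ (m + 2) = σ (m + 1) * cfQ σ (m + 1) + cfQ σ m from rfl, ← h1, ← h2]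
    push_cast
    rfl
  have hqC2 : (cfQ σ (m + 1) : ℝ) = C := by
    rw [← (cont_cfQ σ m).1]
  rw [e1, e2, hqC, hqC2, div_sub_div _ _ hq1.ne' hq2.ne']
  rw [show (s * A + B) * ((s - 1) * C + D) - (s * C + D) * ((s - 1) * A + B)
      = (-1 : ℝ) ^ (m + 1) from by linear_combination hdet]
  congr 1
  ring
end

section
/- Let σ = (σ_1,...,σ_n) be a finite sequence of positive integers with σ_n > 1, and σ' = (σ_1,...,σ_{n-1}, σ_n - 1, 1). Define P*(τ) := Σ_{k=0}^{m} ([τ] - [τ_1,...,τ_k]) q_k(τ) for a sequence τ of length m. Then P*(σ') = P*(σ) + (-1)^n / q_n(σ). -/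
/-- Relative error-sum of a finite CF sequence of length `m`:
`P*(σ) = Σ_{k=0}^{m} ([σ_1,…,σ_m] - [σ_1,…,σ_k]) q_k(σ)`. -/
noncomputable def Pstar (σ : ℕ → ℕ) (m : ℕ) : ℝ :=
  ∑ k ∈ Finset.range (m + 1),
    (cfValAux (cfList σ m) - cfValAux (cfList σ k)) * (cfQ σ (k + 1) : ℝ)

def shf (ρ : ℕ → ℕ) : ℕ → ℕ := fun i => ρ (i + 1)

theorem cfQ_pos : ∀ (ρ : ℕ → ℕ) (k : ℕ), (∀ i, 1 ≤ i → i ≤ k → 1 ≤ ρ i) → 1 ≤ cfQ ρ (k + 1)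
  | ρ, 0, _ => le_refl 1
  | ρ, 1, h => by simpa [cfQ] using h 1 le_rfl le_rfl
  | ρ, (k + 2), h => by
      have ih := cfQ_pos ρ (k + 1) (fun i h1 h2 => h i h1 (h2.trans (by omega)))
      have h2 := h (k + 2) (by omega) le_rfl
      calc 1 ≤ ρ (k + 2) * cfQ ρ (k + 2) := Nat.one_le_iff_ne_zero.2 (by positivity)
        _ ≤ _ := by simp [cfQ]

theorem cfQ_congr : ∀ (ρ ρ' : ℕ → ℕ) (k : ℕ), (∀ i, 1 ≤ i → i ≤ k → ρ i = ρ' i) →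
    cfQ ρ (k + 1) = cfQ ρ' (k + 1)
  | ρ, ρ', 0, _ => rfl
  | ρ, ρ', 1, h => by simp [cfQ, h 1 le_rfl le_rfl]
  | ρ, ρ', (k + 2), h => by
      have ih1 := cfQ_congr ρ ρ' (k + 1) (fun i h1 h2 => h i h1 (h2.trans (by omega)))
      have ih2 := cfQ_congr ρ ρ' k (fun i h1 h2 => h i h1 (h2.trans (by omega)))
      have he := h (k + 2) (by omega) le_rfl
      show ρ (k + 2) * cfQ ρ (k + 2) + cfQ ρ (k + 1) = ρ' (k + 2) * cfQ ρ' (k + 2) + cfQ ρ' (k + 1)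
      rw [he, ih1, ih2]

theorem cfQ_front : ∀ (ρ : ℕ → ℕ) (k : ℕ),
    cfQ ρ (k + 2) = ρ 1 * cfQ (shf ρ) (k + 1) + cfQ (shf (shf ρ)) k
  | ρ, 0 => by simp [cfQ, shf]
  | ρ, 1 => by simp [cfQ, shf]; ring
  | ρ, (k + 2) => by
      have ih1 := cfQ_front ρ (k + 1)
      have ih0 := cfQ_front ρ k
      simp only [cfQ, shf] at *
      ring_nf
      ring_nf at ih1 ih0
      nlinarith [ih1, ih0]

theorem cfQ_det (ρ : ℕ → ℕ) : ∀ (k : ℕ),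
    (cfQ (shf ρ) (k + 1) : ℤ) * cfQ ρ (k + 1) - cfQ (shf ρ) k * cfQ ρ (k + 2) = (-1 : ℤ) ^ k
  | 0 => by simp [cfQ]
  | (k + 1) => by
      have ih := cfQ_det ρ k
      have e1 : cfQ (shf ρ) (k + 2) = ρ (k + 2) * cfQ (shf ρ) (k + 1) + cfQ (shf ρ) k := by
        simp [cfQ, shf]
      have e2 : cfQ ρ (k + 3) = ρ (k + 2) * cfQ ρ (k + 2) + cfQ ρ (k + 1) := by
        simp [cfQ]
      push_cast [e1, e2]
      push_cast at ih
      ring_nf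
      ring_nf at ih
      nlinarith [ih]

theorem cfList_succ_front (ρ : ℕ → ℕ) (m : ℕ) :
    cfList ρ (m + 1) = ρ 1 :: cfList (shf ρ) m := by
  simp [cfList, List.range_succ_eq_map, List.map_map, shf, Function.comp]

theorem cfList_succ_back (ρ : ℕ → ℕ) (m : ℕ) :
    cfList ρ (m + 1) = cfList ρ m ++ [ρ (m + 1)] := by
  simp [cfList, List.range_succ]

theorem cfVal_eq : ∀ (m : ℕ) (ρ : ℕ → ℕ), (∀ i, 1 ≤ i → i ≤ m → 1 ≤ ρ i) →
    cfValAux (cfList ρ m) = (cfQ (shf ρ) m : ℝ) / (cfQ ρ (m + 1) : ℝ)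
  | 0, ρ, _ => by simp [cfList, cfValAux, cfQ]
  | (m + 1), ρ, h => by
      have ih := cfVal_eq m (shf ρ) (fun i h1 h2 => h (i + 1) (by omega) (by omega))
      rw [cfList_succ_front, cfValAux, ih]
      have hB : 1 ≤ cfQ (shf ρ) (m + 1) := cfQ_pos _ m (fun i h1 h2 => h (i + 1) (by omega) (by omega))
      have hB' : (0 : ℝ) < (cfQ (shf ρ) (m + 1) : ℝ) := by exact_mod_cast hB
      have hfront := cfQ_front ρ m
      have h1 : 1 ≤ ρ 1 := h 1 le_rfl (by omega)
      have hD : (0 : ℝ) < (ρ 1 : ℝ) * (cfQ (shf ρ) (m + 1) : ℝ) + (cfQ (shf (shf ρ)) m : ℝ) := by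
        have : (1:ℝ) ≤ (ρ 1 : ℝ) := by exact_mod_cast h1
        nlinarith [Nat.cast_nonneg (α := ℝ) (cfQ (shf (shf ρ)) m)]
      rw [hfront]
      push_cast
      rw [div_eq_div_iff (by positivity) (by positivity)]
      field_simp

theorem cfVal_append : ∀ (L : List ℕ) (a : ℕ), 1 ≤ a →
    cfValAux (L ++ [a - 1, 1]) = cfValAux (L ++ [a])
  | [], a, ha => by
      simp only [List.nil_append, cfValAux]
      have : ((a - 1 : ℕ) : ℝ) = (a : ℝ) - 1 := by
        have : ((a : ℕ) : ℝ) ≥ 1 := by exact_mod_cast ha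
        push_cast [Nat.cast_sub ha]; ring
      rw [this]; norm_num
  | (x :: L), a, ha => by
      have := cfVal_append L a ha
      simp only [List.cons_append, cfValAux]
      rw [show L ++ [a-1,1] = L.append [a-1,1] from rfl, show L ++ [a] = L.append [a] from rfl] at this
      exact congrArg (fun t => 1 / ((x : ℝ) + t)) this

/-- `P*(σ') = P*(σ) + (-1)^n / q_n(σ)` where `σ' = (σ_1,…,σ_{n-1}, σ_n - 1, 1)`. -/
theorem Pstar_modified_sequence (σ : ℕ → ℕ) (n : ℕ) (hn : 1 ≤ n)
    (hσ : ∀ k, 1 ≤ k → k ≤ n → 1 ≤ σ k) (hlast : 2 ≤ σ n) :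
    let σ' : ℕ → ℕ := fun k => if k = n then σ n - 1 else if k = n + 1 then 1 else σ k
    Pstar σ' (n + 1) = Pstar σ n + (-1 : ℝ) ^ n / (cfQ σ (n + 1) : ℝ) := by
  intro σ'
  obtain ⟨m, rfl⟩ : ∃ m, n = m + 1 := ⟨n - 1, by omega⟩
  have hagree : ∀ i, 1 ≤ i → i ≤ m → σ' i = σ i := by
    intro i h1 h2; simp only [σ']; rw [if_neg (by omega), if_neg (by omega)]
  have hσ'n : σ' (m + 1) = σ (m + 1) - 1 := by simp [σ']
  have hσ'n1 : σ' (m + 2) = 1 := by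
    show (if m + 2 = m + 1 then σ (m+1) - 1 else if m + 2 = m + 1 + 1 then 1 else σ (m+2)) = 1
    rw [if_neg (show m + 2 ≠ m + 1 by omega), if_pos rfl]
  have hσ'pos : ∀ i, 1 ≤ i → i ≤ m + 2 → 1 ≤ σ' i := by
    intro i h1 h2
    rcases Nat.lt_or_ge i (m + 1) with h | h
    · rw [hagree i h1 (by omega)]; exact hσ i h1 (by omega)
    · rcases Nat.eq_or_lt_of_le h with h' | h'
      · rw [← h', hσ'n]; omega
      · have : i = m + 2 := by omega
        rw [this, hσ'n1]
  -- lists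
  have hL : ∀ k, k ≤ m → cfList σ' k = cfList σ k := by
    intro k hk
    apply List.map_congr_left
    intro i hi
    have : i < k := List.mem_range.mp hi
    exact hagree (i + 1) (by omega) (by omega)
  have hL2 : cfList σ' (m + 2) = cfList σ m ++ [σ (m + 1) - 1, 1] := by
    rw [cfList_succ_back, cfList_succ_back, hL m le_rfl, hσ'n, hσ'n1, List.append_assoc]
    rfl
  have hL3 : cfList σ (m + 1) = cfList σ m ++ [σ (m + 1)] := cfList_succ_back σ m
  have hV : cfValAux (cfList σ' (m + 2)) = cfValAux (cfList σ (m + 1)) := by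
    rw [hL2, hL3, cfVal_append _ _ (by omega)]
  have hQeq : ∀ k, k ≤ m → cfQ σ' (k + 1) = cfQ σ (k + 1) := by
    intro k hk
    exact cfQ_congr σ' σ k (fun i h1 h2 => hagree i h1 (h2.trans hk))
  -- peel sums
  unfold Pstar
  rw [show (m + 1 + 1 + 1) = (m + 2) + 1 from rfl, Finset.sum_range_succ,
    Finset.sum_range_succ, Finset.sum_range_succ (n := m + 1)]
  rw [sub_self, zero_mul, add_zero, sub_self, zero_mul, add_zero]
  have hsum : ∑ k ∈ Finset.range (m + 1),
      (cfValAux (cfList σ' (m + 2)) - cfValAux (cfList σ' k)) * (cfQ σ' (k + 1) : ℝ)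
      = ∑ k ∈ Finset.range (m + 1),
      (cfValAux (cfList σ (m + 1)) - cfValAux (cfList σ k)) * (cfQ σ (k + 1) : ℝ) := by
    apply Finset.sum_congr rfl
    intro k hk
    have hk' : k ≤ m := Nat.lt_succ_iff.mp (Finset.mem_range.mp hk)
    rw [hV, hL k hk', hQeq k hk']
  rw [show m + 1 + 1 = m + 2 from rfl, hsum]
  congr 1
  -- the key term
  set P : ℝ := (cfQ (shf σ) (m + 1) : ℝ) with hPdef
  set Q : ℝ := (cfQ σ (m + 2) : ℝ) with hQdef
  set P0 : ℝ := (cfQ (shf σ) m : ℝ) with hP0def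
  set Q0 : ℝ := (cfQ σ (m + 1) : ℝ) with hQ0def
  have hVval : cfValAux (cfList σ (m + 1)) = P / Q :=
    cfVal_eq (m + 1) σ (fun i h1 h2 => hσ i h1 h2)
  have hV'val : cfValAux (cfList σ' (m + 1)) = (cfQ (shf σ') (m + 1) : ℝ) / (cfQ σ' (m + 2) : ℝ) :=
    cfVal_eq (m + 1) σ' (fun i h1 h2 => hσ'pos i h1 (by omega))
  -- Q' and P' identities over ℤ
  have hQ'int : (cfQ σ' (m + 2) : ℤ) = cfQ σ (m + 2) - cfQ σ (m + 1) := by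
    have e : cfQ σ' (m + 2) = σ' (m + 1) * cfQ σ' (m + 1) + cfQ σ' m := by simp [cfQ]
    have e2 : cfQ σ (m + 2) = σ (m + 1) * cfQ σ (m + 1) + cfQ σ m := by simp [cfQ]
    have h1 : cfQ σ' (m + 1) = cfQ σ (m + 1) := hQeq m le_rfl
    have h0 : cfQ σ' m = cfQ σ m := by
      cases m with
      | zero => rfl
      | succ j => exact hQeq j (by omega)
    rw [e, e2, h1, h0, hσ'n]
    have : 2 ≤ σ (m + 1) := hlast
    push_cast [Nat.cast_sub (show 1 ≤ σ (m+1) by omega)]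
    ring
  have hP'int : (cfQ (shf σ') (m + 1) : ℤ) = cfQ (shf σ) (m + 1) - cfQ (shf σ) m := by
    have hagree' : ∀ i, 1 ≤ i → i ≤ m - 1 → shf σ' i = shf σ i := by
      intro i h1 h2; exact hagree (i + 1) (by omega) (by omega)
    cases m with
    | zero =>
      show ((1 : ℕ) : ℤ) = ((1 : ℕ) : ℤ) - ((0 : ℕ) : ℤ)
      simp
    | succ j =>
      have e : cfQ (shf σ') (j + 2) = shf σ' (j + 1) * cfQ (shf σ') (j + 1) + cfQ (shf σ') j := by
        simp [cfQ]
      have e2 : cfQ (shf σ) (j + 2) = shf σ (j + 1) * cfQ (shf σ) (j + 1) + cfQ (shf σ) j := by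
        simp [cfQ]
      have h1 : cfQ (shf σ') (j + 1) = cfQ (shf σ) (j + 1) := by
        apply cfQ_congr
        intro i hi1 hi2
        exact hagree (i + 1) (by omega) (by omega)
      have h0 : cfQ (shf σ') j = cfQ (shf σ) j := by
        cases j with
        | zero => rfl
        | succ i =>
          apply cfQ_congr
          intro t ht1 ht2
          exact hagree (t + 1) (by omega) (by omega)
      have hv : shf σ' (j + 1) = σ (j + 2) - 1 := by
        show σ' (j + 2) = σ (j + 2) - 1
        exact hσ'n
      have hv2 : shf σ (j + 1) = σ (j + 2) := rfl
      rw [e, e2, h1, h0, hv, hv2]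
      have : 2 ≤ σ (j + 2) := hlast
      push_cast [Nat.cast_sub (show 1 ≤ σ (j+2) by omega)]
      ring
  have hdet : P * Q0 - P0 * Q = (-1 : ℝ) ^ m := by
    have := cfQ_det σ m
    have : ((cfQ (shf σ) (m + 1) : ℤ) * cfQ σ (m + 1) - cfQ (shf σ) m * cfQ σ (m + 2) : ℤ) = (-1) ^ m := this
    rw [hPdef, hQdef, hP0def, hQ0def]
    exact_mod_cast this
  have hQpos : (1 : ℝ) ≤ Q := by
    rw [hQdef]; exact_mod_cast cfQ_pos σ (m + 1) hσ
  have hQ'pos : (1 : ℝ) ≤ (cfQ σ' (m + 2) : ℝ) := by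
    exact_mod_cast cfQ_pos σ' (m + 1) (fun i h1 h2 => hσ'pos i h1 (by omega))
  have hQne : Q ≠ 0 := by linarith
  have hQ'ne : (cfQ σ' (m + 2) : ℝ) ≠ 0 := by linarith
  have hP'real : (cfQ (shf σ') (m + 1) : ℝ) = P - P0 := by
    rw [hPdef, hP0def]; exact_mod_cast hP'int
  have hQ'real : (cfQ σ' (m + 2) : ℝ) = Q - Q0 := by
    rw [hQdef, hQ0def]; exact_mod_cast hQ'int
  rw [hV, hVval, hV'val, hP'real]
  rw [show ((-1 : ℝ) ^ (m + 1)) = -(-1 : ℝ) ^ m by ring]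
  rw [hQ'real] at hQ'ne ⊢
  have expand : (P / Q - ((P - P0)) / (Q - Q0)) * (Q - Q0) = (P0 * Q - P * Q0) / Q := by
    field_simp
    ring
  rw [expand]
  have hnum : P0 * Q - P * Q0 = -(-1 : ℝ) ^ m := by linarith [hdet]
  rw [hnum, neg_div]
end
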